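/- Suppose for sequences of real numbers one has the interlacing bounds Λ*_{2m−1}(2ℓ) ≤ Λ_m(ℓ) ≤ Λ*_{2m}(2ℓ) for all m for which the quantities are defined, and suppose the number of indices m with Λ*_m(2ℓ) < E₁ equals N. Then the number of indices m with Λ_m(ℓ) < E₁ lies in {⌊N/2⌋, ⌊N/2⌋ + 1}. -/
import Mathlib


open Set

/-- Counting estimate from the interlacing bounds `Λ*_{2m−1}(2ℓ) ≤ Λ_m(ℓ) ≤ Λ*_{2m}(2ℓ)`:
if exactly `N` of the (ordered) values `Λ*_m` lie below the threshold `E₁`, then the number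
of values `Λ_m` below `E₁` is `⌊N/2⌋` or `⌊N/2⌋ + 1`. -/
theorem interlacing_counting (E₁ : ℝ) (Λs Λ : ℕ → ℝ)
    (hmono : ∀ m n : ℕ, 1 ≤ m → m ≤ n → Λs m ≤ Λs n)
    (hinter : ∀ m : ℕ, 1 ≤ m → Λs (2 * m - 1) ≤ Λ m ∧ Λ m ≤ Λs (2 * m))
    (N : ℕ)
    (hfin : {m : ℕ | 1 ≤ m ∧ Λs m < E₁}.Finite)
    (hN : {m : ℕ | 1 ≤ m ∧ Λs m < E₁}.ncard = N) :
    {m : ℕ | 1 ≤ m ∧ Λ m < E₁}.Finite ∧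
    ({m : ℕ | 1 ≤ m ∧ Λ m < E₁}.ncard = N / 2 ∨
     {m : ℕ | 1 ≤ m ∧ Λ m < E₁}.ncard = N / 2 + 1) := by
  set S : Set ℕ := {m : ℕ | 1 ≤ m ∧ Λs m < E₁} with hSdef
  have hIccCard : ∀ k : ℕ, (Set.Icc 1 k).ncard = k := by
    intro k
    rw [show (Set.Icc 1 k) = ↑(Finset.Icc 1 k) by simp, Set.ncard_coe_finset,
      Nat.card_Icc]
    omega
  -- S is an initial segment: S = Icc 1 N
  have hSI : S = Set.Icc 1 N := by
    rcases S.eq_empty_or_nonempty with h | h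
    · have hN0 : N = 0 := by rw [← hN, h, Set.ncard_empty]
      rw [h, hN0]
      simp
    · have hFne : hfin.toFinset.Nonempty := by
        simpa [Set.Finite.toFinset_nonempty] using h
      set M := hfin.toFinset.max' hFne with hMdef
      have hMS : M ∈ S := by
        have := hfin.toFinset.max'_mem hFne
        simpa [Set.Finite.mem_toFinset] using this
      have hSeq : S = Set.Icc 1 M := by
        ext x
        constructor
        · intro hx
          refine ⟨hx.1, ?_⟩
          exact hfin.toFinset.le_max' x (by simpa [Set.Finite.mem_toFinset] using hx)
        · rintro ⟨h1, h2⟩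
          exact ⟨h1, lt_of_le_of_lt (hmono x M h1 h2) hMS.2⟩
      have hMN : M = N := by
        rw [← hN, hSeq, hIccCard]
      rw [hSeq, hMN]
  have hmemS : ∀ m : ℕ, (1 ≤ m ∧ Λs m < E₁) ↔ (1 ≤ m ∧ m ≤ N) := by
    intro m
    constructor
    · intro hm
      have : m ∈ S := hm
      rw [hSI] at this
      exact this
    · intro hm
      have : m ∈ Set.Icc 1 N := hm
      rw [← hSI] at this
      exact this
  set T : Set ℕ := {m : ℕ | 1 ≤ m ∧ Λ m < E₁} with hTdef
  have hsub1 : Set.Icc 1 (N / 2) ⊆ T := by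
    rintro m ⟨h1, h2⟩
    have h2m : 1 ≤ 2 * m ∧ Λs (2 * m) < E₁ := (hmemS (2 * m)).mpr ⟨by omega, by omega⟩
    exact ⟨h1, lt_of_le_of_lt (hinter m h1).2 h2m.2⟩
  have hsub2 : T ⊆ Set.Icc 1 ((N + 1) / 2) := by
    rintro m ⟨h1, h2⟩
    have hS' : 1 ≤ 2 * m - 1 ∧ Λs (2 * m - 1) < E₁ :=
      ⟨by omega, lt_of_le_of_lt (hinter m h1).1 h2⟩
    have := (hmemS (2 * m - 1)).mp hS'
    exact ⟨h1, by omega⟩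
  have hTfin : T.Finite := (Set.finite_Icc 1 ((N + 1) / 2)).subset hsub2
  refine ⟨hTfin, ?_⟩
  have hlo : N / 2 ≤ T.ncard := by
    calc N / 2 = (Set.Icc 1 (N / 2)).ncard := (hIccCard _).symm
    _ ≤ T.ncard := Set.ncard_le_ncard hsub1 hTfin
  have hhi : T.ncard ≤ (N + 1) / 2 := by
    calc T.ncard ≤ (Set.Icc 1 ((N + 1) / 2)).ncard :=
      Set.ncard_le_ncard hsub2 (Set.finite_Icc _ _)
    _ = (N + 1) / 2 := hIccCard _
  omega
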